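/- arXiv:2501.16233 — 2 statements merged into one kernel-verified Lean document; each statement's English description precedes it below -/
import Mathlib

section
/- For a finite cyclic group G of order n, the reduced power graph R(G) is isomorphic to the divisor graph D(n), whose vertices are the positive divisors of n with two distinct divisors adjacent iff one divides the other. -/
/-- An interval graph: adjacency given by intersection of closed real intervals. -/
def IsIntervalGraph {V : Type*} (I : SimpleGraph V) : Prop :=
  ∃ a b : V → ℝ, ∀ u v : V,
    I.Adj u v ↔ u ≠ v ∧ (Set.Icc (a u) (b u) ∩ Set.Icc (a v) (b v)).Nonempty

/-- A unit interval graph: adjacency given by intersection of closed unit intervals. -/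
def IsUnitIntervalGraph {V : Type*} (I : SimpleGraph V) : Prop :=
  ∃ a : V → ℝ, ∀ u v : V,
    I.Adj u v ↔ u ≠ v ∧ (Set.Icc (a u) (a u + 1) ∩ Set.Icc (a v) (a v + 1)).Nonempty

/-- Boxicity: least `k` such that `G` is the intersection of `k` interval graphs. -/
noncomputable def boxicity {V : Type*} (G : SimpleGraph V) : ℕ :=
  sInf {k | ∃ I : Fin k → SimpleGraph V, (∀ i, IsIntervalGraph (I i)) ∧
    ∀ u v, G.Adj u v ↔ (u ≠ v ∧ ∀ i, (I i).Adj u v)}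

/-- Cubicity: least `k` such that `G` is the intersection of `k` unit interval graphs. -/
noncomputable def cubicity {V : Type*} (G : SimpleGraph V) : ℕ :=
  sInf {k | ∃ I : Fin k → SimpleGraph V, (∀ i, IsUnitIntervalGraph (I i)) ∧
    ∀ u v, G.Adj u v ↔ (u ≠ v ∧ ∀ i, (I i).Adj u v)}

/-- Transitive closure of the Cartesian product of complete graphs `K_{m i + 1}`. -/
def TCC {d : ℕ} (m : Fin d → ℕ) : SimpleGraph (∀ i, Fin (m i + 1)) where
  Adj x y := x ≠ y ∧ ((∀ i, (x i : ℕ) ≤ y i) ∨ (∀ i, (y i : ℕ) ≤ x i))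
  symm := ⟨fun _ _ h => ⟨h.1.symm, h.2.symm⟩⟩
  loopless := ⟨fun _ h => h.1 rfl⟩

/-- Transitive closure of the `s`-dimensional hypercube. -/
def TCH (s : ℕ) : SimpleGraph (∀ _ : Fin s, Fin 2) := TCC (fun _ => 1)

/-- The power graph of a group: distinct `x, y` adjacent iff one is a power of the other. -/
def powerGraph (G : Type*) [Group G] : SimpleGraph G where
  Adj x y := x ≠ y ∧ ((∃ m : ℕ, y = x ^ m) ∨ (∃ m : ℕ, x = y ^ m))
  symm := ⟨fun _ _ h => ⟨h.1.symm, h.2.symm⟩⟩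
  loopless := ⟨fun _ h => h.1 rfl⟩

/-- `x ∼ y` iff `x` and `y` generate the same cyclic subgroup. -/
def genSetoid (G : Type*) [Group G] : Setoid G where
  r x y := Subgroup.zpowers x = Subgroup.zpowers y
  iseqv := ⟨fun _ => rfl, Eq.symm, Eq.trans⟩

/-- The reduced power graph: vertices are the classes of `genSetoid`, two distinct classes
being adjacent iff their representatives are adjacent in the power graph. -/
def reducedPowerGraph (G : Type*) [Group G] : SimpleGraph (Quotient (genSetoid G)) where
  Adj a b := a ≠ b ∧ ∃ x y : G,
    Quotient.mk (genSetoid G) x = a ∧ Quotient.mk (genSetoid G) y = b ∧ (powerGraph G).Adj x y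
  symm := by
    refine ⟨?_⟩
    rintro a b ⟨hab, x, y, hx, hy, hadj⟩
    exact ⟨hab.symm, y, x, hy, hx, hadj.symm⟩
  loopless := ⟨fun _ h => h.1 rfl⟩

/-- The divisor graph `D(n)`: vertices are the divisors of `n`, two distinct divisors
being adjacent iff one divides the other. -/
def divisorGraph (n : ℕ) : SimpleGraph {d : ℕ // d ∣ n} where
  Adj a b := a ≠ b ∧ ((a : ℕ) ∣ (b : ℕ) ∨ (b : ℕ) ∣ (a : ℕ))
  symm := ⟨fun _ _ h => ⟨h.1.symm, h.2.symm⟩⟩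
  loopless := ⟨fun _ h => h.1 rfl⟩

section Aux
open Subgroup

lemma aux_mem_zpowers_of_orderOf_dvd {G : Type*} [Group G] [Fintype G] [IsCyclic G]
    {x y : G} (h : orderOf x ∣ orderOf y) : x ∈ zpowers y := by
  classical
  have hy : 0 < orderOf y := orderOf_pos y
  have hle := IsCyclic.card_pow_eq_one_le (α := G) hy
  set S : Finset G := Finset.univ.filter (fun b => b ^ orderOf y = 1) with hS
  have hsub : Set.toFinset ((zpowers y : Subgroup G) : Set G) ⊆ S := by
    intro b hb
    rw [Set.mem_toFinset] at hb
    simp only [hS, Finset.mem_filter, Finset.mem_univ, true_and]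
    exact orderOf_dvd_iff_pow_eq_one.mp (orderOf_dvd_of_mem_zpowers hb)
  have hcard : (Set.toFinset ((zpowers y : Subgroup G) : Set G)).card = orderOf y := by
    rw [Set.toFinset_card]
    simpa using Fintype.card_zpowers (x := y)
  have heq : S = Set.toFinset ((zpowers y : Subgroup G) : Set G) :=
    (Finset.eq_of_subset_of_card_le hsub (by rw [hcard]; exact hle)).symm
  have hxS : x ∈ S := by
    simp only [hS, Finset.mem_filter, Finset.mem_univ, true_and]
    exact orderOf_dvd_iff_pow_eq_one.mp h
  rw [heq, Set.mem_toFinset] at hxS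
  exact hxS

lemma aux_zpowers_eq_of_orderOf_eq {G : Type*} [Group G] [Fintype G] [IsCyclic G]
    {x y : G} (h : orderOf x = orderOf y) : zpowers x = zpowers y :=
  le_antisymm (zpowers_le.mpr (aux_mem_zpowers_of_orderOf_dvd h.dvd))
    (zpowers_le.mpr (aux_mem_zpowers_of_orderOf_dvd h.symm.dvd))

lemma aux_exists_pow_eq_of_orderOf_dvd {G : Type*} [Group G] [Fintype G] [IsCyclic G]
    {x y : G} (h : orderOf x ∣ orderOf y) : ∃ m : ℕ, x = y ^ m := by
  obtain ⟨m, hm⟩ := (IsOfFinOrder.mem_powers_iff_mem_zpowers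
    (x := y) (isOfFinOrder_of_finite y)).mpr (aux_mem_zpowers_of_orderOf_dvd h)
  exact ⟨m, hm.symm⟩

end Aux

theorem reducedPowerGraph_iso_divisorGraph (G : Type*) [Group G] [Fintype G]
    (hG : IsCyclic G) (n : ℕ) (hn : Fintype.card G = n) :
    Nonempty (reducedPowerGraph G ≃g divisorGraph n) := by
  classical
  haveI := hG
  subst hn
  open Subgroup in
  let f : Quotient (genSetoid G) → {d : ℕ // d ∣ Fintype.card G} :=
    Quotient.lift (fun x => ⟨orderOf x, orderOf_dvd_card⟩)
      (fun x y (h : Subgroup.zpowers x = Subgroup.zpowers y) => by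
        have : orderOf x = orderOf y := by
          rw [← Nat.card_zpowers, h, Nat.card_zpowers]
        simp [this])
  have hf_mk : ∀ x : G, (f (Quotient.mk (genSetoid G) x) : ℕ) = orderOf x := fun _ => rfl
  have hinj : Function.Injective f := by
    intro a b
    refine Quotient.inductionOn₂ a b (fun x y h => ?_)
    have : orderOf x = orderOf y := congrArg Subtype.val h
    exact Quotient.sound (aux_zpowers_eq_of_orderOf_eq this)
  have hsurj : Function.Surjective f := by
    rintro ⟨d, hd⟩
    have hd0 : 0 < d := Nat.pos_of_dvd_of_pos hd Fintype.card_pos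
    have htot := IsCyclic.card_orderOf_eq_totient (α := G) hd
    have hpos : 0 < (Finset.univ.filter (fun a : G => orderOf a = d)).card := by
      rw [htot]; exact Nat.totient_pos.mpr hd0
    obtain ⟨x, hx⟩ := Finset.card_pos.mp hpos
    simp only [Finset.mem_filter] at hx
    exact ⟨Quotient.mk (genSetoid G) x, Subtype.ext (hx.2)⟩
  have key : ∀ a b : Quotient (genSetoid G),
      (reducedPowerGraph G).Adj a b ↔ (divisorGraph (Fintype.card G)).Adj (f a) (f b) := by
    intro a b
    refine Quotient.inductionOn₂ a b (fun x y => ?_)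
    constructor
    · rintro ⟨hab, x', y', hx', hy', hne, hpow⟩
      have hx'' : orderOf x' = orderOf x := by
        have := Quotient.exact (s := genSetoid G) hx'
        rw [← Nat.card_zpowers, this, Nat.card_zpowers]
      have hy'' : orderOf y' = orderOf y := by
        have := Quotient.exact (s := genSetoid G) hy'
        rw [← Nat.card_zpowers, this, Nat.card_zpowers]
      refine ⟨fun h => hab (hinj h), ?_⟩
      rcases hpow with ⟨m, rfl⟩ | ⟨m, rfl⟩
      · right
        rw [hf_mk, hf_mk, ← hx'', ← hy'']
        exact orderOf_pow_dvd m
      · left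
        rw [hf_mk, hf_mk, ← hx'', ← hy'']
        exact orderOf_pow_dvd m
    · rintro ⟨hne, hdvd⟩
      have hxy : ¬ Quotient.mk (genSetoid G) x = Quotient.mk (genSetoid G) y :=
        fun h => hne (congrArg f h)
      have hxyne : x ≠ y := fun h => hxy (by rw [h])
      refine ⟨hxy, x, y, rfl, rfl, hxyne, ?_⟩
      simp only [hf_mk] at hdvd
      rcases hdvd with h | h
      · obtain ⟨m, hm⟩ := aux_exists_pow_eq_of_orderOf_dvd h
        exact Or.inr ⟨m, hm⟩
      · obtain ⟨m, hm⟩ := aux_exists_pow_eq_of_orderOf_dvd h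
        exact Or.inl ⟨m, hm⟩
  exact ⟨⟨Equiv.ofBijective f ⟨hinj, hsurj⟩, fun {a b} => (key a b).symm⟩⟩
end

section
/- For d ≥ 3 and natural numbers m₁ ≤ ⋯ ≤ m_d: if d is odd then box(TCC(m₁,…,m_d)) ≥ (m₁ + m₃ + ⋯ + m_{d−2}) + m_{d−1}, and if d is even then box(TCC(m₁,…,m_d)) ≥ (m₂ + m₄ + ⋯ + m_{d−2}) + m_{d−1}. -/
open Set in
lemma disj_order {a b a' b' : ℝ} (h : ¬(Set.Icc a b ∩ Set.Icc a' b').Nonempty)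
    (hne : a ≤ b) (hne' : a' ≤ b') : b < a' ∨ b' < a := by
  by_contra hc
  push_neg at hc
  exact h ⟨max a a', ⟨le_max_left _ _, max_le hne hc.1⟩, ⟨le_max_right _ _, max_le hc.2 hne'⟩⟩

lemma no_C4 {aA bA aB bB aC bC aD bD : ℝ}
    (hAB : (Set.Icc aA bA ∩ Set.Icc aB bB).Nonempty)
    (hBC : (Set.Icc aB bB ∩ Set.Icc aC bC).Nonempty)
    (hCD : (Set.Icc aC bC ∩ Set.Icc aD bD).Nonempty)
    (hDA : (Set.Icc aD bD ∩ Set.Icc aA bA).Nonempty)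
    (hAC : ¬(Set.Icc aA bA ∩ Set.Icc aC bC).Nonempty)
    (hBD : ¬(Set.Icc aB bB ∩ Set.Icc aD bD).Nonempty) : False := by
  obtain ⟨x1, ⟨hx1a, hx1b⟩, ⟨hx1c, hx1d⟩⟩ := hAB
  obtain ⟨x2, ⟨hx2a, hx2b⟩, ⟨hx2c, hx2d⟩⟩ := hBC
  obtain ⟨x3, ⟨hx3a, hx3b⟩, ⟨hx3c, hx3d⟩⟩ := hCD
  obtain ⟨x4, ⟨hx4a, hx4b⟩, ⟨hx4c, hx4d⟩⟩ := hDA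
  rcases disj_order hAC (le_trans hx1a hx1b) (le_trans hx2c hx2d) with h1 | h1 <;>
    rcases disj_order hBD (le_trans hx1c hx1d) (le_trans hx3c hx3d) with h2 | h2 <;>
    linarith

lemma no_C6_aux {a0 b0 a1 b1 a2 b2 a3 b3 a4 b4 a5 b5 : ℝ}
    (h01 : (Set.Icc a0 b0 ∩ Set.Icc a1 b1).Nonempty)
    (h12 : (Set.Icc a1 b1 ∩ Set.Icc a2 b2).Nonempty)
    (h23 : (Set.Icc a2 b2 ∩ Set.Icc a3 b3).Nonempty)
    (h34 : (Set.Icc a3 b3 ∩ Set.Icc a4 b4).Nonempty)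
    (h45 : (Set.Icc a4 b4 ∩ Set.Icc a5 b5).Nonempty)
    (h50 : (Set.Icc a5 b5 ∩ Set.Icc a0 b0).Nonempty)
    (h13 : ¬(Set.Icc a1 b1 ∩ Set.Icc a3 b3).Nonempty)
    (h15 : ¬(Set.Icc a1 b1 ∩ Set.Icc a5 b5).Nonempty)
    (h14 : ¬(Set.Icc a1 b1 ∩ Set.Icc a4 b4).Nonempty)
    (hcase : b0 < a2) : False := by
  obtain ⟨x10, ⟨hx10a, hx10b⟩, ⟨hx10c, hx10d⟩⟩ := h01
  obtain ⟨x12, ⟨hx12a, hx12b⟩, ⟨hx12c, hx12d⟩⟩ := h12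
  obtain ⟨x23, ⟨hx23a, hx23b⟩, ⟨hx23c, hx23d⟩⟩ := h23
  obtain ⟨x34, ⟨hx34a, hx34b⟩, ⟨hx34c, hx34d⟩⟩ := h34
  obtain ⟨x45, ⟨hx45a, hx45b⟩, ⟨hx45c, hx45d⟩⟩ := h45
  obtain ⟨x50, ⟨hx50a, hx50b⟩, ⟨hx50c, hx50d⟩⟩ := h50
  have hb3 : b1 < a3 := by
    rcases disj_order h13 (le_trans hx12a hx12b) (le_trans hx23c hx23d) with h | h
    · exact h
    · linarith
  have hb5 : b5 < a1 := by
    rcases disj_order h15 (le_trans hx12a hx12b) (le_trans hx45c hx45d) with h | h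
    · linarith
    · exact h
  rcases disj_order h14 (le_trans hx12a hx12b) (le_trans hx34c hx34d) with h | h <;> linarith

lemma no_C6 {a0 b0 a1 b1 a2 b2 a3 b3 a4 b4 a5 b5 : ℝ}
    (h01 : (Set.Icc a0 b0 ∩ Set.Icc a1 b1).Nonempty)
    (h12 : (Set.Icc a1 b1 ∩ Set.Icc a2 b2).Nonempty)
    (h23 : (Set.Icc a2 b2 ∩ Set.Icc a3 b3).Nonempty)
    (h34 : (Set.Icc a3 b3 ∩ Set.Icc a4 b4).Nonempty)
    (h45 : (Set.Icc a4 b4 ∩ Set.Icc a5 b5).Nonempty)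
    (h50 : (Set.Icc a5 b5 ∩ Set.Icc a0 b0).Nonempty)
    (h02 : ¬(Set.Icc a0 b0 ∩ Set.Icc a2 b2).Nonempty)
    (h03 : ¬(Set.Icc a0 b0 ∩ Set.Icc a3 b3).Nonempty)
    (h04 : ¬(Set.Icc a0 b0 ∩ Set.Icc a4 b4).Nonempty)
    (h13 : ¬(Set.Icc a1 b1 ∩ Set.Icc a3 b3).Nonempty)
    (h14 : ¬(Set.Icc a1 b1 ∩ Set.Icc a4 b4).Nonempty)
    (h15 : ¬(Set.Icc a1 b1 ∩ Set.Icc a5 b5).Nonempty)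
    (h24 : ¬(Set.Icc a2 b2 ∩ Set.Icc a4 b4).Nonempty)
    (h25 : ¬(Set.Icc a2 b2 ∩ Set.Icc a5 b5).Nonempty)
    (h35 : ¬(Set.Icc a3 b3 ∩ Set.Icc a5 b5).Nonempty) : False := by
  obtain ⟨x01, ⟨hx1, hx2⟩, ⟨hx3, hx4⟩⟩ := id h01
  obtain ⟨x12, ⟨hy1, hy2⟩, ⟨hy3, hy4⟩⟩ := id h12
  rcases disj_order h02 (le_trans hx1 hx2) (le_trans hy3 hy4) with h | h
  · exact no_C6_aux h01 h12 h23 h34 h45 h50 h13 h15 h14 h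
  · have comm : ∀ {s t : Set ℝ}, (s ∩ t).Nonempty → (t ∩ s).Nonempty := by
      intro s t h; rwa [Set.inter_comm]
    exact no_C6_aux (comm h12) (comm h01) (comm h50) (comm h45) (comm h34) (comm h23)
      h15 h13 h14 h

/-- cyclic neighbours in a 6-cycle -/
def nbr (a b : Fin 6) : Prop := (b : ℕ) = ((a : ℕ) + 1) % 6 ∨ (a : ℕ) = ((b : ℕ) + 1) % 6

instance : DecidableRel nbr := fun _ _ => by unfold nbr; infer_instance

def vset {V : Type*} {Γ Δ : Type*} (x y : Γ → V) (w : Δ → Fin 6 → V) : Γ ⊕ Δ → Set V :=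
  fun g => match g with
  | .inl t => {x t, y t}
  | .inr t => Set.range (w t)

set_option maxHeartbeats 1000000 in
lemma main_abstract {V : Type*} (G : SimpleGraph V) {Γ Δ : Type*} [Fintype Γ] [Fintype Δ]
    (k : ℕ) (I : Fin k → SimpleGraph V) (hI : ∀ i, IsIntervalGraph (I i))
    (hG : ∀ u v, G.Adj u v ↔ u ≠ v ∧ ∀ i, (I i).Adj u v)
    (x y : Γ → V) (w : Δ → Fin 6 → V)
    (hp : ∀ t, x t ≠ y t ∧ ¬ G.Adj (x t) (y t))
    (hwinj : ∀ t, Function.Injective (w t))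
    (hw : ∀ t (a b : Fin 6), a ≠ b → (G.Adj (w t a) (w t b) ↔ nbr a b))
    (hcross : ∀ g g' : Γ ⊕ Δ, g ≠ g' →
      ∀ u ∈ vset x y w g, ∀ v ∈ vset x y w g', G.Adj u v) :
    Fintype.card Γ + 2 * Fintype.card Δ ≤ k := by
  classical
  set S : Γ ⊕ Δ → Finset (Fin k) := fun g =>
    Finset.univ.filter (fun i => ∃ u v, u ∈ vset x y w g ∧ v ∈ vset x y w g ∧ u ≠ v ∧
      ¬ (I i).Adj u v) with hS
  have hmemS : ∀ i g, i ∈ S g ↔ ∃ u v, u ∈ vset x y w g ∧ v ∈ vset x y w g ∧ u ≠ v ∧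
      ¬ (I i).Adj u v := by
    intro i g; rw [hS]; simp
  -- disjointness via C4
  have hdisj : ∀ g g', g ≠ g' → Disjoint (S g) (S g') := by
    intro g g' hgg'
    rw [Finset.disjoint_left]
    intro i hig hig'
    obtain ⟨u, v, hu, hv, huv, hnadj⟩ := (hmemS i g).1 hig
    obtain ⟨u', v', hu', hv', huv', hnadj'⟩ := (hmemS i g').1 hig'
    obtain ⟨A, B, hrep⟩ := hI i
    have duv : ¬(Set.Icc (A u) (B u) ∩ Set.Icc (A v) (B v)).Nonempty :=
      fun hn => hnadj ((hrep u v).2 ⟨huv, hn⟩)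
    have duv' : ¬(Set.Icc (A u') (B u') ∩ Set.Icc (A v') (B v')).Nonempty :=
      fun hn => hnadj' ((hrep u' v').2 ⟨huv', hn⟩)
    have cr : ∀ a ∈ vset x y w g, ∀ b ∈ vset x y w g',
        (Set.Icc (A a) (B a) ∩ Set.Icc (A b) (B b)).Nonempty := by
      intro a ha b hb
      exact ((hrep a b).1 (((hG a b).1 (hcross g g' hgg' a ha b hb)).2 i)).2
    have cr' : ∀ a ∈ vset x y w g', ∀ b ∈ vset x y w g,
        (Set.Icc (A a) (B a) ∩ Set.Icc (A b) (B b)).Nonempty := by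
      intro a ha b hb
      exact ((hrep a b).1 (((hG a b).1 (hcross g' g (Ne.symm hgg') a ha b hb)).2 i)).2
    exact no_C4 (cr u hu u' hu') (cr' u' hu' v hv) (cr v hv v' hv') (cr' v' hv' u hu) duv duv'
  -- each pair gadget contributes at least 1
  have hpair : ∀ t : Γ, 1 ≤ (S (Sum.inl t)).card := by
    intro t
    obtain ⟨hne, hnadj⟩ := hp t
    rw [hG] at hnadj
    push_neg at hnadj
    obtain ⟨i, hi⟩ := hnadj hne
    refine Finset.card_pos.2 ⟨i, (hmemS i _).2 ⟨x t, y t, ?_, ?_, hne, hi⟩⟩ <;>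
      simp [vset]
  -- each hex gadget contributes at least 2
  have hhex : ∀ t : Δ, 2 ≤ (S (Sum.inr t)).card := by
    intro t
    have miss : ∀ a b : Fin 6, a ≠ b → ¬ nbr a b →
        ∃ i, ¬ (I i).Adj (w t a) (w t b) ∧ i ∈ S (Sum.inr t) := by
      intro a b hab hnb
      have h1 : ¬ G.Adj (w t a) (w t b) := fun h => hnb ((hw t a b hab).1 h)
      have h2 : w t a ≠ w t b := fun h => hab (hwinj t h)
      rw [hG] at h1
      push_neg at h1
      obtain ⟨i, hi⟩ := h1 h2
      exact ⟨i, hi, (hmemS i _).2 ⟨w t a, w t b, ⟨a, rfl⟩, ⟨b, rfl⟩, h2, hi⟩⟩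
    by_contra hlt
    push_neg at hlt
    obtain ⟨i0, hi0, hi0mem⟩ := miss 0 2 (by decide) (by decide)
    have hone : ∀ j ∈ S (Sum.inr t), j = i0 := by
      intro j hj
      exact Finset.card_le_one.1 (by omega) j hj i0 hi0mem
    have B2 : ∀ a b : Fin 6, a ≠ b → ¬ nbr a b → ¬ (I i0).Adj (w t a) (w t b) := by
      intro a b hab hnb
      obtain ⟨j, hj1, hj2⟩ := miss a b hab hnb
      rwa [hone j hj2] at hj1
    have E : ∀ a b : Fin 6, a ≠ b → nbr a b → (I i0).Adj (w t a) (w t b) := by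
      intro a b hab hnb
      exact ((hG _ _).1 ((hw t a b hab).2 hnb)).2 i0
    obtain ⟨A, B, hrep⟩ := hI i0
    have NE : ∀ a b : Fin 6, a ≠ b → nbr a b →
        (Set.Icc (A (w t a)) (B (w t a)) ∩ Set.Icc (A (w t b)) (B (w t b))).Nonempty :=
      fun a b hab hnb => ((hrep _ _).1 (E a b hab hnb)).2
    have DJ : ∀ a b : Fin 6, a ≠ b → ¬ nbr a b →
        ¬ (Set.Icc (A (w t a)) (B (w t a)) ∩ Set.Icc (A (w t b)) (B (w t b))).Nonempty := by
      intro a b hab hnb hn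
      exact B2 a b hab hnb ((hrep _ _).2 ⟨fun h => hab (hwinj t h), hn⟩)
    exact no_C6 (NE 0 1 (by decide) (by decide)) (NE 1 2 (by decide) (by decide))
      (NE 2 3 (by decide) (by decide)) (NE 3 4 (by decide) (by decide))
      (NE 4 5 (by decide) (by decide)) (NE 5 0 (by decide) (by decide))
      (DJ 0 2 (by decide) (by decide)) (DJ 0 3 (by decide) (by decide))
      (DJ 0 4 (by decide) (by decide)) (DJ 1 3 (by decide) (by decide))
      (DJ 1 4 (by decide) (by decide)) (DJ 1 5 (by decide) (by decide))
      (DJ 2 4 (by decide) (by decide)) (DJ 2 5 (by decide) (by decide))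
      (DJ 3 5 (by decide) (by decide))
  -- count
  calc Fintype.card Γ + 2 * Fintype.card Δ
      = ∑ t : Γ, 1 + ∑ t : Δ, 2 := by simp [mul_comm]
    _ ≤ ∑ t : Γ, (S (Sum.inl t)).card + ∑ t : Δ, (S (Sum.inr t)).card := by
        gcongr with t _ t _
        · exact hpair t
        · exact hhex t
    _ = ∑ g : Γ ⊕ Δ, (S g).card := (Fintype.sum_sum_type (fun g => (S g).card)).symm
    _ = (Finset.univ.biUnion S).card :=
        (Finset.card_biUnion (fun g _ g' _ h => hdisj g g' h)).symm
    _ ≤ (Finset.univ : Finset (Fin k)).card := Finset.card_le_card (Finset.subset_univ _)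
    _ = k := by simp

/-- complete graph minus one edge, as an interval graph -/
def Kminus {V : Type*} [DecidableEq V] (u₀ v₀ : V) : SimpleGraph V where
  Adj u v := u ≠ v ∧ ¬((u = u₀ ∧ v = v₀) ∨ (u = v₀ ∧ v = u₀))
  symm := ⟨by intro u v h; exact ⟨h.1.symm, fun hc => h.2 (by tauto)⟩⟩
  loopless := ⟨fun u h => h.1 rfl⟩

lemma isIntervalGraph_Kminus {V : Type*} [DecidableEq V] (u₀ v₀ : V) (h₀ : u₀ ≠ v₀) :
    IsIntervalGraph (Kminus u₀ v₀) := by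
  classical
  refine ⟨fun u => if u = v₀ then 2 else 0, fun u => if u = u₀ then 1 else 3, fun u v => ?_⟩
  constructor
  · rintro ⟨h1, h2⟩
    push_neg at h2
    refine ⟨h1, ?_⟩
    by_cases hu : u = v₀
    · have hv1 : v ≠ v₀ := fun h => h1 (hu.trans h.symm)
      have hv2 : v ≠ u₀ := h2.2 hu
      have hu2 : u ≠ u₀ := fun h => h₀ (h.symm.trans hu)
      refine ⟨2, ?_⟩
      simp only [Set.mem_inter_iff, Set.mem_Icc, if_pos hu, if_neg hu2, if_neg hv1, if_neg hv2]
      norm_num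
    · by_cases hv : v = v₀
      · have hu1 : u ≠ u₀ := fun h => h2.1 h hv
        have hv2 : v ≠ u₀ := fun h => h₀ (h.symm.trans hv)
        refine ⟨2, ?_⟩
        simp only [Set.mem_inter_iff, Set.mem_Icc, if_neg hu, if_neg hu1, if_pos hv, if_neg hv2]
        norm_num
      · refine ⟨0, ?_⟩
        simp only [Set.mem_inter_iff, Set.mem_Icc, if_neg hu, if_neg hv]
        split_ifs <;> norm_num
  · rintro ⟨h1, h2⟩
    refine ⟨h1, ?_⟩
    rintro (⟨rfl, rfl⟩ | ⟨rfl, rfl⟩) <;>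
    · obtain ⟨x, hx1, hx2⟩ := h2
      simp only [Set.mem_Icc, if_neg h₀, if_neg (Ne.symm h₀), if_pos rfl, if_true, eq_self_iff_true] at hx1 hx2
      linarith

lemma box_set_nonempty {V : Type*} [Fintype V] (G : SimpleGraph V) :
    {k | ∃ I : Fin k → SimpleGraph V, (∀ i, IsIntervalGraph (I i)) ∧
      ∀ u v, G.Adj u v ↔ (u ≠ v ∧ ∀ i, (I i).Adj u v)}.Nonempty := by
  classical
  set P := {e : V × V // e.1 ≠ e.2 ∧ ¬ G.Adj e.1 e.2} with hP
  have : Fintype P := by infer_instance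
  set k := Fintype.card P with hk
  set eqv := (Fintype.equivFin P).symm with heqv
  refine ⟨k, fun i => Kminus (eqv i).1.1 (eqv i).1.2, fun i =>
    isIntervalGraph_Kminus _ _ (eqv i).2.1, fun u v => ?_⟩
  constructor
  · intro h
    refine ⟨h.ne, fun i => ⟨h.ne, ?_⟩⟩
    rintro (⟨rfl, rfl⟩ | ⟨rfl, rfl⟩)
    · exact (eqv i).2.2 h
    · exact (eqv i).2.2 h.symm
  · rintro ⟨hne, hall⟩
    by_contra hna
    have := hall (eqv.symm ⟨(u, v), hne, hna⟩)
    rw [heqv] at this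
    simp only [Equiv.apply_symm_apply] at this
    exact this.2 (Or.inl ⟨rfl, rfl⟩)

section Construction

variable (m : ℕ → ℕ)

def vtx (c v0 v1 v2 : ℕ) : ℕ → ℕ := fun i =>
  if i < c then m i else if i = c then v0 else if i = c + 1 then v1
    else if i = c + 2 then v2 else 0

def mk {d : ℕ} (f : ℕ → ℕ) (hf : ∀ i : Fin d, f i ≤ m i) : ∀ i : Fin d, Fin (m i + 1) :=
  fun i => ⟨f i, Nat.lt_succ_of_le (hf i)⟩

lemma vtx_at0 (c v0 v1 v2 : ℕ) : vtx m c v0 v1 v2 c = v0 := by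
  unfold vtx; rw [if_neg (by omega), if_pos rfl]

lemma vtx_at1 (c v0 v1 v2 : ℕ) : vtx m c v0 v1 v2 (c + 1) = v1 := by
  unfold vtx; rw [if_neg (by omega), if_neg (by omega), if_pos rfl]

lemma vtx_at2 (c v0 v1 v2 : ℕ) : vtx m c v0 v1 v2 (c + 2) = v2 := by
  unfold vtx; rw [if_neg (by omega), if_neg (by omega), if_neg (by omega), if_pos rfl]

lemma vtx_at_lt (c v0 v1 v2 i : ℕ) (h : i < c) : vtx m c v0 v1 v2 i = m i := by
  unfold vtx; rw [if_pos h]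

lemma vtx_le_m (c v0 v1 v2 : ℕ) (h0 : v0 ≤ m c) (h1 : v1 ≤ m (c + 1)) (h2 : v2 ≤ m (c + 2)) :
    ∀ i : ℕ, vtx m c v0 v1 v2 i ≤ m i := by
  intro i
  unfold vtx
  split_ifs with a b e f <;> subst_eqs <;> omega

variable {d : ℕ}

lemma adj_mk {f g : ℕ → ℕ} {hf : ∀ i : Fin d, f i ≤ m i} {hg : ∀ i : Fin d, g i ≤ m i} :
    (TCC (fun i : Fin d => m i)).Adj (mk m f hf) (mk m g hg) ↔
      ((∃ i : Fin d, f (i : ℕ) ≠ g (i : ℕ)) ∧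
        ((∀ i : Fin d, f (i : ℕ) ≤ g (i : ℕ)) ∨ (∀ i : Fin d, g (i : ℕ) ≤ f (i : ℕ)))) := by
  show (_ ≠ _ ∧ _) ↔ _
  constructor
  · rintro ⟨h1, h2⟩
    refine ⟨?_, h2⟩
    by_contra hc
    push_neg at hc
    exact h1 (funext fun i => Fin.ext (hc i))
  · rintro ⟨⟨i, hi⟩, h2⟩
    exact ⟨fun he => hi (congrArg Fin.val (congrFun he i)), h2⟩

lemma mk_ne {f g : ℕ → ℕ} {hf : ∀ i : Fin d, f i ≤ m i} {hg : ∀ i : Fin d, g i ≤ m i}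
    (i0 : Fin d) (hne : f (i0 : ℕ) ≠ g (i0 : ℕ)) : mk m f hf ≠ mk m g hg :=
  fun he => hne (congrArg Fin.val (congrFun he i0))

lemma adj_of_le_ne {f g : ℕ → ℕ} {hf : ∀ i : Fin d, f i ≤ m i} {hg : ∀ i : Fin d, g i ≤ m i}
    (hle : ∀ i : Fin d, f (i : ℕ) ≤ g (i : ℕ)) (i0 : Fin d) (hne : f (i0 : ℕ) ≠ g (i0 : ℕ)) :
    (TCC (fun i : Fin d => m i)).Adj (mk m f hf) (mk m g hg) :=
  (adj_mk m).2 ⟨⟨i0, hne⟩, Or.inl hle⟩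

lemma vtx_mono_same {c v0 v1 v2 v0' v1' v2' : ℕ} (h0 : v0 ≤ v0') (h1 : v1 ≤ v1')
    (h2 : v2 ≤ v2') : ∀ i : ℕ, vtx m c v0 v1 v2 i ≤ vtx m c v0' v1' v2' i := by
  intro i
  unfold vtx
  split_ifs <;> omega

lemma vtx_mono_lt {c c' v0 v1 v2 v0' v1' v2' : ℕ} (hcc : c + 2 ≤ c') (hv2 : v2 = 0)
    (hb0 : v0 ≤ m c) (hb1 : v1 ≤ m (c + 1)) :
    ∀ i : ℕ, vtx m c v0 v1 v2 i ≤ vtx m c' v0' v1' v2' i := by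
  intro i
  unfold vtx
  split_ifs <;> subst_eqs <;> omega

lemma adj_vtx_same_iff {c v0 v1 v2 v0' v1' v2' : ℕ} (hc3 : c + 3 ≤ d)
    {hf : ∀ i : Fin d, vtx m c v0 v1 v2 i ≤ m i} {hg : ∀ i : Fin d, vtx m c v0' v1' v2' i ≤ m i} :
    (TCC (fun i : Fin d => m i)).Adj (mk m (vtx m c v0 v1 v2) hf) (mk m (vtx m c v0' v1' v2') hg)
      ↔ (¬(v0 = v0' ∧ v1 = v1' ∧ v2 = v2') ∧
        ((v0 ≤ v0' ∧ v1 ≤ v1' ∧ v2 ≤ v2') ∨ (v0' ≤ v0 ∧ v1' ≤ v1 ∧ v2' ≤ v2))) := by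
  rw [adj_mk]
  have e0 : ((⟨c, by omega⟩ : Fin d) : ℕ) = c := rfl
  have e1 : ((⟨c + 1, by omega⟩ : Fin d) : ℕ) = c + 1 := rfl
  have e2 : ((⟨c + 2, by omega⟩ : Fin d) : ℕ) = c + 2 := rfl
  constructor
  · rintro ⟨⟨i, hi⟩, h2⟩
    constructor
    · rintro ⟨q0, q1, q2⟩
      apply hi
      unfold vtx
      split_ifs <;> omega
    · rcases h2 with h | h
      · left
        refine ⟨?_, ?_, ?_⟩
        · have := h ⟨c, by omega⟩; rwa [e0, vtx_at0, vtx_at0] at this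
        · have := h ⟨c + 1, by omega⟩; rwa [e1, vtx_at1, vtx_at1] at this
        · have := h ⟨c + 2, by omega⟩; rwa [e2, vtx_at2, vtx_at2] at this
      · right
        refine ⟨?_, ?_, ?_⟩
        · have := h ⟨c, by omega⟩; rwa [e0, vtx_at0, vtx_at0] at this
        · have := h ⟨c + 1, by omega⟩; rwa [e1, vtx_at1, vtx_at1] at this
        · have := h ⟨c + 2, by omega⟩; rwa [e2, vtx_at2, vtx_at2] at this
  · rintro ⟨hne, h2⟩
    constructor
    · by_cases q0 : v0 = v0'
      · by_cases q1 : v1 = v1'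
        · refine ⟨⟨c + 2, by omega⟩, ?_⟩
          rw [e2, vtx_at2, vtx_at2]
          tauto
        · refine ⟨⟨c + 1, by omega⟩, ?_⟩
          rw [e1, vtx_at1, vtx_at1]
          exact q1
      · refine ⟨⟨c, by omega⟩, ?_⟩
        rw [e0, vtx_at0, vtx_at0]
        exact q0
    · rcases h2 with h | h
      · exact Or.inl fun i => vtx_mono_same m h.1 h.2.1 h.2.2 _
      · exact Or.inr fun i => vtx_mono_same m h.1 h.2.1 h.2.2 _

lemma adj_vtx_same {c v0 v1 v2 v0' v1' v2' : ℕ} (hc3 : c + 3 ≤ d)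
    {hf : ∀ i : Fin d, vtx m c v0 v1 v2 i ≤ m i} {hg : ∀ i : Fin d, vtx m c v0' v1' v2' i ≤ m i}
    (h0 : v0 ≤ v0') (h1 : v1 ≤ v1') (h2 : v2 ≤ v2') (hne : ¬(v0 = v0' ∧ v1 = v1' ∧ v2 = v2')) :
    (TCC (fun i : Fin d => m i)).Adj (mk m (vtx m c v0 v1 v2) hf)
      (mk m (vtx m c v0' v1' v2') hg) :=
  (adj_vtx_same_iff m hc3).2 ⟨hne, Or.inl ⟨h0, h1, h2⟩⟩

lemma adj_vtx_lt {c c' v0 v1 v2 v0' v1' v2' : ℕ} (hcc : c + 2 ≤ c') (hc'3 : c' + 3 ≤ d)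
    (hv2 : v2 = 0) (hb0 : v0 ≤ m c) (hb1 : v1 ≤ m (c + 1)) (hne : v0 < m c ∨ v1 < m (c + 1))
    {hf : ∀ i : Fin d, vtx m c v0 v1 v2 i ≤ m i} {hg : ∀ i : Fin d, vtx m c' v0' v1' v2' i ≤ m i} :
    (TCC (fun i : Fin d => m i)).Adj (mk m (vtx m c v0 v1 v2) hf)
      (mk m (vtx m c' v0' v1' v2') hg) := by
  rcases hne with hne | hne
  · refine adj_of_le_ne m (fun i => vtx_mono_lt m hcc hv2 hb0 hb1 _) ⟨c, by omega⟩ ?_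
    show vtx m c v0 v1 v2 c ≠ vtx m c' v0' v1' v2' c
    rw [vtx_at0, vtx_at_lt m c' _ _ _ c (by omega)]
    omega
  · refine adj_of_le_ne m (fun i => vtx_mono_lt m hcc hv2 hb0 hb1 _) ⟨c + 1, by omega⟩ ?_
    show vtx m c v0 v1 v2 (c + 1) ≠ vtx m c' v0' v1' v2' (c + 1)
    rw [vtx_at1, vtx_at_lt m c' _ _ _ (c + 1) (by omega)]
    omega

end Construction

def avec : Fin 6 → ℕ := ![1, 1, 0, 0, 0, 1]
def bvec : Fin 6 → ℕ := ![0, 1, 1, 1, 0, 0]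
def cvec : Fin 6 → ℕ := ![0, 0, 0, 1, 1, 1]

lemma vec_le1 : ∀ a : Fin 6, avec a ≤ 1 ∧ bvec a ≤ 1 ∧ cvec a ≤ 1 := by decide

lemma vec_zero : ∀ a : Fin 6, avec a = 0 ∨ bvec a = 0 ∨ cvec a = 0 := by decide

lemma vec_ne : ∀ a b : Fin 6, a ≠ b →
    ¬(avec a = avec b ∧ bvec a = bvec b ∧ cvec a = cvec b) := by decide

lemma vec_comp : ∀ a b : Fin 6, a ≠ b →
    (((avec a ≤ avec b ∧ bvec a ≤ bvec b ∧ cvec a ≤ cvec b) ∨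
      (avec b ≤ avec a ∧ bvec b ≤ bvec a ∧ cvec b ≤ cvec a)) ↔ nbr a b) := by decide

lemma construct (d σ B : ℕ) (m : ℕ → ℕ) (hσB : σ + 2 * B + 3 = d)
    (hm : ∀ i j : ℕ, i ≤ j → j < d → m i ≤ m j)
    (k : ℕ) (I : Fin k → SimpleGraph (∀ i : Fin d, Fin (m i + 1)))
    (hI : ∀ i, IsIntervalGraph (I i))
    (hG : ∀ u v, (TCC (fun i : Fin d => m i)).Adj u v ↔ (u ≠ v ∧ ∀ i, (I i).Adj u v)) :
    (∑ j ∈ Finset.range B, m (σ + 2 * j)) + (m (σ + 2 * B + 1) - m (σ + 2 * B)) +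
      2 * m (σ + 2 * B) ≤ k := by
  classical
  set G := TCC (fun i : Fin d => m i) with hGdef
  set e := σ + 2 * B with he
  set q := m e with hq
  have hqM : q ≤ m (e + 1) := hm e (e + 1) (by omega) (by omega)
  have hM2 : m (e + 1) ≤ m (e + 2) := hm (e + 1) (e + 2) (by omega) (by omega)
  -- index types
  set Γ := (Σ j : Fin B, Fin (m (σ + 2 * (j : ℕ)))) ⊕ Fin (m (e + 1) - q) with hΓ
  set Δ := Fin q with hΔ
  -- bounds
  have hbX : ∀ (j : Fin B) (t : Fin (m (σ + 2 * (j : ℕ)))),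
      ∀ i : Fin d, vtx m (σ + 2 * (j : ℕ)) (t : ℕ) ((t : ℕ) + 1) 0 (i : ℕ) ≤ m (i : ℕ) := by
    intro j t i
    have ht := t.isLt
    have hj := j.isLt
    have hmono : m (σ + 2 * (j : ℕ)) ≤ m (σ + 2 * (j : ℕ) + 1) := hm _ _ (by omega) (by omega)
    exact vtx_le_m m _ _ _ _ (by omega) (by omega) (by omega) _
  have hbY : ∀ (j : Fin B) (t : Fin (m (σ + 2 * (j : ℕ)))),
      ∀ i : Fin d, vtx m (σ + 2 * (j : ℕ)) ((t : ℕ) + 1) (t : ℕ) 0 (i : ℕ) ≤ m (i : ℕ) := by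
    intro j t i
    have ht := t.isLt
    have hj := j.isLt
    have hmono : m (σ + 2 * (j : ℕ)) ≤ m (σ + 2 * (j : ℕ) + 1) := hm _ _ (by omega) (by omega)
    exact vtx_le_m m _ _ _ _ (by omega) (by omega) (by omega) _
  have hbPX : ∀ (s : Fin (m (e + 1) - q)),
      ∀ i : Fin d, vtx m e q (q + (s : ℕ)) (q + (s : ℕ) + 1) (i : ℕ) ≤ m (i : ℕ) := by
    intro s i
    have hs := s.isLt
    exact vtx_le_m m _ _ _ _ (by omega) (by omega) (by omega) _
  have hbPY : ∀ (s : Fin (m (e + 1) - q)),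
      ∀ i : Fin d, vtx m e q (q + (s : ℕ) + 1) (q + (s : ℕ)) (i : ℕ) ≤ m (i : ℕ) := by
    intro s i
    have hs := s.isLt
    exact vtx_le_m m _ _ _ _ (by omega) (by omega) (by omega) _
  have hbW : ∀ (t : Fin q) (a : Fin 6),
      ∀ i : Fin d, vtx m e ((t : ℕ) + avec a) ((t : ℕ) + bvec a) ((t : ℕ) + cvec a) (i : ℕ)
        ≤ m (i : ℕ) := by
    intro t a i
    have ht := t.isLt
    have hv := vec_le1 a
    exact vtx_le_m m _ _ _ _ (by omega) (by omega) (by omega) _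
  -- gadget vertices
  set x : Γ → (∀ i : Fin d, Fin (m i + 1)) := fun g =>
    Sum.rec (fun p => mk m _ (hbX p.1 p.2)) (fun s => mk m _ (hbPX s)) g with hx
  set y : Γ → (∀ i : Fin d, Fin (m i + 1)) := fun g =>
    Sum.rec (fun p => mk m _ (hbY p.1 p.2)) (fun s => mk m _ (hbPY s)) g with hy
  set w : Δ → Fin 6 → (∀ i : Fin d, Fin (m i + 1)) := fun t a => mk m _ (hbW t a) with hwdef
  have hp : ∀ t : Γ, x t ≠ y t ∧ ¬ G.Adj (x t) (y t) := by
    rintro (⟨j, t⟩ | s) <;> simp only [hx, hy] <;> constructor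
    · have hj := j.isLt
      refine mk_ne m ⟨σ + 2 * (j : ℕ), by omega⟩ ?_
      show vtx m (σ + 2 * (j : ℕ)) (t : ℕ) ((t : ℕ) + 1) 0 (σ + 2 * (j : ℕ)) ≠
        vtx m (σ + 2 * (j : ℕ)) ((t : ℕ) + 1) (t : ℕ) 0 (σ + 2 * (j : ℕ))
      rw [vtx_at0, vtx_at0]
      omega
    · have hj := j.isLt
      rw [hGdef, adj_vtx_same_iff m (by omega)]
      omega
    · refine mk_ne m ⟨e + 1, by omega⟩ ?_
      show vtx m e q (q + (s : ℕ)) (q + (s : ℕ) + 1) (e + 1) ≠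
        vtx m e q (q + (s : ℕ) + 1) (q + (s : ℕ)) (e + 1)
      rw [vtx_at1, vtx_at1]
      omega
    · rw [hGdef, adj_vtx_same_iff m (by omega)]
      omega
  have hwinj : ∀ t : Δ, Function.Injective (w t) := by
    intro t a b hab
    by_contra hne
    have h6 := vec_ne a b hne
    by_cases h0 : avec a = avec b
    · by_cases h1 : bvec a = bvec b
      · refine (mk_ne m ⟨e + 2, by omega⟩ ?_) hab
        show vtx m e ((t:ℕ) + avec a) ((t:ℕ) + bvec a) ((t:ℕ) + cvec a) (e + 2) ≠
          vtx m e ((t:ℕ) + avec b) ((t:ℕ) + bvec b) ((t:ℕ) + cvec b) (e + 2)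
        rw [vtx_at2, vtx_at2]
        omega
      · refine (mk_ne m ⟨e + 1, by omega⟩ ?_) hab
        show vtx m e ((t:ℕ) + avec a) ((t:ℕ) + bvec a) ((t:ℕ) + cvec a) (e + 1) ≠
          vtx m e ((t:ℕ) + avec b) ((t:ℕ) + bvec b) ((t:ℕ) + cvec b) (e + 1)
        rw [vtx_at1, vtx_at1]
        omega
    · refine (mk_ne m ⟨e, by omega⟩ ?_) hab
      show vtx m e ((t:ℕ) + avec a) ((t:ℕ) + bvec a) ((t:ℕ) + cvec a) e ≠
        vtx m e ((t:ℕ) + avec b) ((t:ℕ) + bvec b) ((t:ℕ) + cvec b) e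
      rw [vtx_at0, vtx_at0]
      omega
  have hwadj : ∀ (t : Δ) (a b : Fin 6), a ≠ b → (G.Adj (w t a) (w t b) ↔ nbr a b) := by
    intro t a b hab
    simp only [hwdef]
    rw [hGdef, adj_vtx_same_iff m (by omega), ← vec_comp a b hab]
    have h6 := vec_ne a b hab
    omega
  -- ascending adjacency lemmas
  have hBlt : ∀ (j : Fin B), σ + 2 * (j : ℕ) + 3 ≤ d := fun j => by
    have := j.isLt; omega
  have hmono : ∀ (j : Fin B), m (σ + 2 * (j : ℕ)) ≤ m (σ + 2 * (j : ℕ) + 1) := fun j =>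
    hm _ _ (by omega) (by have := j.isLt; omega)
  -- cross adjacency
  have hcross : ∀ g g' : Γ ⊕ Δ, g ≠ g' →
      ∀ u ∈ vset x y w g, ∀ v ∈ vset x y w g', G.Adj u v := by
    -- block asc block
    have L1 : ∀ (j j' : Fin B) (t : Fin (m (σ + 2 * (j:ℕ)))) (t' : Fin (m (σ + 2 * (j':ℕ)))),
        ((j:ℕ) < (j':ℕ) ∨ ((j:ℕ) = (j':ℕ) ∧ (t:ℕ) < (t':ℕ))) →
        ∀ u ∈ vset x y w (Sum.inl (Sum.inl ⟨j, t⟩)),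
        ∀ v ∈ vset x y w (Sum.inl (Sum.inl ⟨j', t'⟩)), G.Adj u v := by
      intro j j' t t' hlt u hu v hv
      have ht := t.isLt
      have ht' := t'.isLt
      have hmj := hmono j
      have hmj' := hmono j'
      rcases hlt with hlt | ⟨hje, hlt⟩
      · rcases hu with rfl | rfl <;> rcases hv with rfl | rfl <;>
          simp only [hx, hy, hGdef] <;>
          exact adj_vtx_lt m (by omega) (by have := hBlt j'; omega) rfl (by omega) (by omega)
            (by omega)
      · have : j = j' := Fin.ext hje
        subst this
        rcases hu with rfl | rfl <;> rcases hv with rfl | rfl <;>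
          simp only [hx, hy, hGdef] <;>
          exact adj_vtx_same m (hBlt j) (by omega) (by omega) (by omega) (by omega)
    -- block asc pair2
    have L2 : ∀ (j : Fin B) (t : Fin (m (σ + 2 * (j:ℕ)))) (s : Fin (m (e + 1) - q)),
        ∀ u ∈ vset x y w (Sum.inl (Sum.inl ⟨j, t⟩)),
        ∀ v ∈ vset x y w (Sum.inl (Sum.inr s)), G.Adj u v := by
      intro j t s u hu v hv
      have ht := t.isLt
      have hj := j.isLt
      have hmj := hmono j
      rcases hu with rfl | rfl <;> rcases hv with rfl | rfl <;>
        simp only [hx, hy, hGdef] <;>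
        exact adj_vtx_lt m (by omega) (by omega) rfl (by omega) (by omega) (by omega)
    -- block asc hex
    have L3 : ∀ (j : Fin B) (t : Fin (m (σ + 2 * (j:ℕ)))) (t' : Δ) (a : Fin 6),
        ∀ u ∈ vset x y w (Sum.inl (Sum.inl ⟨j, t⟩)), G.Adj u (w t' a) := by
      intro j t t' a u hu
      have ht := t.isLt
      have hj := j.isLt
      have hmj := hmono j
      rcases hu with rfl | rfl <;>
        simp only [hx, hy, hwdef, hGdef] <;>
        exact adj_vtx_lt m (by omega) (by omega) rfl (by omega) (by omega) (by omega)
    -- hex asc hex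
    have L4 : ∀ (t t' : Δ) (a b : Fin 6), (t:ℕ) < (t':ℕ) → G.Adj (w t a) (w t' b) := by
      intro t t' a b hlt
      have hla := vec_le1 a
      have hlb := vec_le1 b
      have hza := vec_zero a
      simp only [hwdef, hGdef]
      exact adj_vtx_same m (by omega) (by omega) (by omega) (by omega) (by omega)
    -- hex asc pair2
    have L5 : ∀ (t : Δ) (a : Fin 6) (s : Fin (m (e + 1) - q)),
        ∀ v ∈ vset x y w (Sum.inl (Sum.inr s)), G.Adj (w t a) v := by
      intro t a s v hv
      have hla := vec_le1 a
      have hza := vec_zero a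
      have ht := t.isLt
      rcases hv with rfl | rfl <;>
        simp only [hx, hy, hwdef, hGdef] <;>
        exact adj_vtx_same m (by omega) (by omega) (by omega) (by omega) (by omega)
    -- pair2 asc pair2
    have L6 : ∀ (s s' : Fin (m (e + 1) - q)), (s:ℕ) < (s':ℕ) →
        ∀ u ∈ vset x y w (Sum.inl (Sum.inr s)),
        ∀ v ∈ vset x y w (Sum.inl (Sum.inr s')), G.Adj u v := by
      intro s s' hlt u hu v hv
      rcases hu with rfl | rfl <;> rcases hv with rfl | rfl <;>
        simp only [hx, hy, hGdef] <;>
        exact adj_vtx_same m (by omega) (by omega) (by omega) (by omega) (by omega)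
    rintro ((⟨j, t⟩ | s) | t) ((⟨j', t'⟩ | s') | t') hne u hu v hv
    · -- block block
      rcases Nat.lt_trichotomy (j : ℕ) (j' : ℕ) with h | h | h
      · exact L1 j j' t t' (Or.inl h) u hu v hv
      · have : j = j' := Fin.ext h
        subst this
        rcases Nat.lt_trichotomy (t : ℕ) (t' : ℕ) with h2 | h2 | h2
        · exact L1 j j t t' (Or.inr ⟨rfl, h2⟩) u hu v hv
        · exact absurd (by rw [Fin.ext h2]) hne
        · exact (L1 j j t' t (Or.inr ⟨rfl, h2⟩) v hv u hu).symm
      · exact (L1 j' j t' t (Or.inl h) v hv u hu).symm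
    · exact L2 j t s' u hu v hv
    · obtain ⟨a, rfl⟩ := hv
      exact L3 j t t' a u hu
    · exact (L2 j' t' s v hv u hu).symm
    · rcases Nat.lt_trichotomy (s : ℕ) (s' : ℕ) with h | h | h
      · exact L6 s s' h u hu v hv
      · exact absurd (by rw [Fin.ext h]) hne
      · exact (L6 s' s h v hv u hu).symm
    · obtain ⟨a, rfl⟩ := hv
      exact (L5 t' a s u hu).symm
    · obtain ⟨a, rfl⟩ := hu
      exact (L3 j' t' t a v hv).symm
    · obtain ⟨a, rfl⟩ := hu
      exact L5 t a s' v hv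
    · obtain ⟨a, rfl⟩ := hu
      obtain ⟨b, rfl⟩ := hv
      rcases Nat.lt_trichotomy (t : ℕ) (t' : ℕ) with h | h | h
      · exact L4 t t' a b h
      · exact absurd (by rw [Fin.ext h]) hne
      · exact (L4 t' t b a h).symm
  have hcard := main_abstract G k I hI hG x y w hp hwinj hwadj hcross
  have c1 : Fintype.card Γ =
      (∑ j ∈ Finset.range B, m (σ + 2 * j)) + (m (e + 1) - q) := by
    have : Fintype.card Γ =
        Fintype.card ((Σ j : Fin B, Fin (m (σ + 2 * (j : ℕ)))) ⊕ Fin (m (e + 1) - q)) := rfl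
    rw [this, Fintype.card_sum, Fintype.card_sigma]
    simp only [Fintype.card_fin]
    rw [Fin.sum_univ_eq_sum_range (fun j => m (σ + 2 * j)) B]
  have c2 : Fintype.card Δ = q := by
    have : Fintype.card Δ = Fintype.card (Fin q) := rfl
    simp [this]
  omega

theorem boxicity_TCC_lower (d : ℕ) (hd : 3 ≤ d) (m : ℕ → ℕ)
    (hm : ∀ i j : ℕ, i ≤ j → j < d → m i ≤ m j) :
    (Odd d →
      (∑ i ∈ (Finset.range (d - 2)).filter (fun i => Even i), m i) + m (d - 2) ≤
        boxicity (TCC (fun i : Fin d => m i))) ∧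
    (Even d →
      (∑ i ∈ (Finset.range (d - 2)).filter (fun i => Odd i), m i) + m (d - 2) ≤
        boxicity (TCC (fun i : Fin d => m i))) := by
  have hmono : m (d - 3) ≤ m (d - 2) := hm _ _ (by omega) (by omega)
  constructor
  · intro hodd
    obtain ⟨r, hr⟩ := hodd
    set B := r - 1 with hB
    have hσB : 0 + 2 * B + 3 = d := by omega
    show _ ≤ sInf _
    apply le_csInf (box_set_nonempty _)
    rintro k ⟨I, hI, hGk⟩
    have hcon := construct d 0 B m hσB hm k I hI hGk
    have hsum : ∑ i ∈ (Finset.range (d - 2)).filter (fun i => Even i), m i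
        = (∑ j ∈ Finset.range B, m (0 + 2 * j)) + m (0 + 2 * B) := by
      have himg : (Finset.range (d - 2)).filter (fun i => Even i)
          = (Finset.range (B + 1)).image (fun j => 0 + 2 * j) := by
        ext i
        simp only [Finset.mem_filter, Finset.mem_range, Finset.mem_image, Nat.even_iff]
        constructor
        · rintro ⟨h1, h2⟩
          exact ⟨i / 2, by omega, by omega⟩
        · rintro ⟨j, hj, rfl⟩
          omega
      rw [himg, Finset.sum_image (by intro a _ b _ hab; simp only at hab; omega), Finset.sum_range_succ]
    rw [show (0 : ℕ) + 2 * B + 1 = d - 2 by omega] at hcon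
    rw [show (0 : ℕ) + 2 * B = d - 3 by omega] at hcon hsum
    omega
  · intro heven
    obtain ⟨r, hr⟩ := heven
    set B := r - 2 with hB
    have hσB : 1 + 2 * B + 3 = d := by omega
    show _ ≤ sInf _
    apply le_csInf (box_set_nonempty _)
    rintro k ⟨I, hI, hGk⟩
    have hcon := construct d 1 B m hσB hm k I hI hGk
    have hsum : ∑ i ∈ (Finset.range (d - 2)).filter (fun i => Odd i), m i
        = (∑ j ∈ Finset.range B, m (1 + 2 * j)) + m (1 + 2 * B) := by
      have himg : (Finset.range (d - 2)).filter (fun i => Odd i)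
          = (Finset.range (B + 1)).image (fun j => 1 + 2 * j) := by
        ext i
        simp only [Finset.mem_filter, Finset.mem_range, Finset.mem_image, Nat.odd_iff]
        constructor
        · rintro ⟨h1, h2⟩
          exact ⟨i / 2, by omega, by omega⟩
        · rintro ⟨j, hj, rfl⟩
          omega
      rw [himg, Finset.sum_image (by intro a _ b _ hab; simp only at hab; omega), Finset.sum_range_succ]
    rw [show (1 : ℕ) + 2 * B + 1 = d - 2 by omega] at hcon
    rw [show (1 : ℕ) + 2 * B = d - 3 by omega] at hcon hsum
    omega
end
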